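/- For any finite set X and any integer i ≥ 1, there is a bijection between the set of i-tuples (f₁, ..., f_i) of surjective maps X ↠ {0,1} and the set of pairs (S, g), where S ⊆ {0,1}^i is a subset such that every coordinate projection S → {0,1} (1 ≤ j ≤ i) is surjective, and g : X ↠ S is a surjective map; the bijection sends (f₁,...,f_i) to the pair consisting of the image S of the combined map (f₁,...,f_i) : X → {0,1}^i and its corestriction g : X ↠ S. Consequently, for a field k, in the functor category Fun(Γ₋^op, Vect_k) the pointwise tensor power s₂^{⊗i} decomposes as the direct sum ⊕_S s_{|S|}, over all subsets S ⊆ {0,1}^i whose coordinate projections to {0,1} are all surjective, where s_n denotes the functor represented by an n-element set. -/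

import Mathlib

/-!
An `i`-tuple of maps `X → {0,1}` is a single map `X → {0,1}^i`, and that map factors uniquely as
a surjection onto its image `S` followed by the inclusion; the coordinates are surjective exactly
when the coordinate projections of `S` are. The factorisation commutes with precomposition by
surjections `Y ↠ X`, so on free `k`-modules it gives a natural isomorphism
`k[Surj(X,{0,1})^i] ≅ k[Σ_S Surj(X,S)] ≅ ⊕_S k[Surj(X,S)]`.
-/

open CategoryTheory CategoryTheory.Limits

open scoped DirectSum

noncomputable section

/-- The category `Γ₋` of finite nonempty sets, with surjective maps as morphisms. -/
structure GammaMinus : Type 1 where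
  carrier : Type
  [nonempty : Nonempty carrier]
  [finite : Finite carrier]

attribute [instance] GammaMinus.nonempty GammaMinus.finite

instance : Category GammaMinus where
  Hom X Y := {f : X.carrier → Y.carrier // Function.Surjective f}
  id X := ⟨id, Function.surjective_id⟩
  comp f g := ⟨g.1 ∘ f.1, g.2.comp f.2⟩

/-- Surjections from `X` onto a type `A`. -/
def SurjTo (X : GammaMinus) (A : Type) : Type := {f : X.carrier → A // Function.Surjective f}

/-- Subsets `S ⊆ {0,1}^i` all of whose coordinate projections are surjective. -/
def GoodSubsets (i : ℕ) : Type :=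
  {S : Set (Fin i → Bool) // ∀ j : Fin i, Function.Surjective (fun s : S => (s : Fin i → Bool) j)}

/-- The map sending an `i`-tuple of surjections `X ↠ {0,1}` to the pair consisting of the
image `S ⊆ {0,1}^i` of the combined map and its corestriction `X ↠ S`. -/
def tupleToPair (i : ℕ) (X : Type)
    (f : {f : Fin i → X → Bool // ∀ j, Function.Surjective (f j)}) :
    Σ S : GoodSubsets i, {g : X → (S.1 : Set (Fin i → Bool)) // Function.Surjective g} :=
  ⟨⟨Set.range (fun x j => f.1 j x), by
      intro j b
      obtain ⟨x, hx⟩ := f.2 j b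
      exact ⟨⟨fun j' => f.1 j' x, ⟨x, rfl⟩⟩, hx⟩⟩,
    ⟨fun x => ⟨fun j => f.1 j x, ⟨x, rfl⟩⟩, by
      rintro ⟨s, x, hx⟩
      exact ⟨x, Subtype.ext hx⟩⟩⟩

variable (k : Type) [Field k]

/-- The `i`-th pointwise tensor power `s₂^{⊗i} : Γ₋ᵒᵖ → Vect_k` of the functor
`s₂ : X ↦ k[Surj(X, {0,1})]`, realized via its canonical basis as the free module on
`i`-tuples of surjections `X ↠ {0,1}`. -/
def s2Pow (i : ℕ) : GammaMinusᵒᵖ ⥤ ModuleCat.{0} k where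
  obj X := ModuleCat.of k ((Fin i → SurjTo X.unop Bool) →₀ k)
  map {X Y} g := ModuleCat.ofHom (Finsupp.lmapDomain k k
    (fun t (j : Fin i) => (⟨(t j).1 ∘ g.unop.1, (t j).2.comp g.unop.2⟩ : SurjTo Y.unop Bool)))
  map_id X := by
    apply ModuleCat.hom_ext
    apply Finsupp.lhom_ext
    intro t b
    show Finsupp.mapDomain _ (Finsupp.single t b) = Finsupp.single t b
    exact Finsupp.mapDomain_single
  map_comp {X Y Z} f g := by
    apply ModuleCat.hom_ext
    apply Finsupp.lhom_ext
    intro t b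
    show Finsupp.mapDomain _ (Finsupp.single t b) = _
    show _ = Finsupp.mapDomain _ (Finsupp.mapDomain _ (Finsupp.single t b))
    erw [Finsupp.mapDomain_single, Finsupp.mapDomain_single, Finsupp.mapDomain_single]
    rfl

/-- The direct sum `⊕_S s_{|S|}` over all subsets `S ⊆ {0,1}^i` with surjective coordinate
projections, where `s_A : X ↦ k[Surj(X, A)]` is the functor represented by the set `A`. -/
def sSum (i : ℕ) : GammaMinusᵒᵖ ⥤ ModuleCat.{0} k where
  obj X := ModuleCat.of k
    (⨁ S : GoodSubsets i, (SurjTo X.unop (S.1 : Set (Fin i → Bool)) →₀ k))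
  map {X Y} g := ModuleCat.ofHom (DFinsupp.mapRange.linearMap
    (fun S => Finsupp.lmapDomain k k
      (fun (t : SurjTo X.unop (S.1 : Set (Fin i → Bool))) =>
        (⟨t.1 ∘ g.unop.1, t.2.comp g.unop.2⟩ : SurjTo Y.unop (S.1 : Set (Fin i → Bool))))))
  map_id X := by
    apply ModuleCat.hom_ext
    dsimp only
    exact (congrArg DFinsupp.mapRange.linearMap (show (fun S : GoodSubsets i => Finsupp.lmapDomain k k
        (fun (t : SurjTo X.unop (S.1 : Set (Fin i → Bool))) =>
          (⟨t.1 ∘ (𝟙 X).unop.1, t.2.comp (𝟙 X).unop.2⟩ :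
            SurjTo X.unop (S.1 : Set (Fin i → Bool))))) =
        fun S : GoodSubsets i => LinearMap.id from
      funext fun S => Finsupp.lhom_ext fun a b => by
        show Finsupp.mapDomain _ (Finsupp.single a b) = Finsupp.single a b
        exact Finsupp.mapDomain_single)).trans DFinsupp.mapRange.linearMap_id
  map_comp {X Y Z} f g := by
    apply ModuleCat.hom_ext
    dsimp only
    exact (congrArg DFinsupp.mapRange.linearMap (show (fun S : GoodSubsets i => Finsupp.lmapDomain k k
        (fun (t : SurjTo X.unop (S.1 : Set (Fin i → Bool))) =>
          (⟨t.1 ∘ (f ≫ g).unop.1, t.2.comp (f ≫ g).unop.2⟩ :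
            SurjTo Z.unop (S.1 : Set (Fin i → Bool))))) =
        fun S : GoodSubsets i =>
          (Finsupp.lmapDomain k k
            (fun (t : SurjTo Y.unop (S.1 : Set (Fin i → Bool))) =>
              (⟨t.1 ∘ g.unop.1, t.2.comp g.unop.2⟩ :
                SurjTo Z.unop (S.1 : Set (Fin i → Bool))))).comp
          (Finsupp.lmapDomain k k
            (fun (t : SurjTo X.unop (S.1 : Set (Fin i → Bool))) =>
              (⟨t.1 ∘ f.unop.1, t.2.comp f.unop.2⟩ :
                SurjTo Y.unop (S.1 : Set (Fin i → Bool))))) from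
      funext fun S => Finsupp.lhom_ext fun a b => by
        show Finsupp.mapDomain _ (Finsupp.single a b) =
          Finsupp.mapDomain _ (Finsupp.mapDomain _ (Finsupp.single a b))
        erw [Finsupp.mapDomain_single, Finsupp.mapDomain_single, Finsupp.mapDomain_single]
        rfl)).trans
      (DFinsupp.mapRange.linearMap_comp _ _)

abbrev SurjPairs (i : ℕ) (X : Type) : Type :=
  Σ S : GoodSubsets i, {g : X → (S.1 : Set (Fin i → Bool)) // Function.Surjective g}

theorem SurjPairs.ext {i : ℕ} {X : Type} {p q : SurjPairs i X} (hS : p.1.1 = q.1.1)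
    (hg : ∀ x, (p.2.1 x : Fin i → Bool) = q.2.1 x) : p = q := by
  obtain ⟨S, g⟩ := p
  obtain ⟨S', g'⟩ := q
  obtain rfl : S = S' := Subtype.ext hS
  exact congrArg (Sigma.mk S) (Subtype.ext (funext fun x => Subtype.ext (hg x)))

theorem tupleToPair_injective (i : ℕ) (X : Type) : Function.Injective (tupleToPair i X) := by
  intro f f' h
  ext j x
  exact congrArg (fun p : SurjPairs i X => (p.2.1 x : Fin i → Bool) j) h

theorem tupleToPair_surjective (i : ℕ) (X : Type) : Function.Surjective (tupleToPair i X) := by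
  rintro ⟨S, g, hg⟩
  refine ⟨⟨fun j x => (g x : Fin i → Bool) j, fun j => (S.2 j).comp hg⟩,
    SurjPairs.ext ?_ fun _ => rfl⟩
  change Set.range (Subtype.val ∘ g) = S.1
  rw [hg.range_comp, Subtype.range_coe]

theorem tupleToPair_bijective (i : ℕ) (X : Type) : Function.Bijective (tupleToPair i X) :=
  ⟨tupleToPair_injective i X, tupleToPair_surjective i X⟩

def surjTupleEquivSurjPairs (i : ℕ) (X : Type) :
    (Fin i → {f : X → Bool // Function.Surjective f}) ≃ SurjPairs i X :=
  Equiv.subtypePiEquivPi.symm.trans (.ofBijective _ (tupleToPair_bijective i X))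

theorem surjTupleEquivSurjPairs_comp {i : ℕ} {X Y : Type} {g : Y → X}
    (hg : Function.Surjective g)
    (t : Fin i → {f : X → Bool // Function.Surjective f}) :
    surjTupleEquivSurjPairs i Y (fun j => ⟨(t j).1 ∘ g, (t j).2.comp hg⟩) =
      ⟨(surjTupleEquivSurjPairs i X t).1,
        (surjTupleEquivSurjPairs i X t).2.1 ∘ g, (surjTupleEquivSurjPairs i X t).2.2.comp hg⟩ :=
  SurjPairs.ext (hg.range_comp fun x j => (t j).1 x) fun _ => rfl

theorem sigmaFinsuppLequivDFinsupp_domLCongr_single {R M α ι : Type*} {η : ι → Type*}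
    [Semiring R] [AddCommMonoid M] [Module R M] [DecidableEq ι] (e : α ≃ Σ i, η i)
    (a : α) (m : M) :
    sigmaFinsuppLequivDFinsupp (R := R)
        (Finsupp.domLCongr (M := M) (R := R) e (Finsupp.single a m)) =
      DFinsupp.single (β := fun i => η i →₀ M) (e a).1 (Finsupp.single (e a).2 m) := by
  simp

open Classical in
def s2PowIsoSSum (i : ℕ) : s2Pow k i ≅ sSum k i :=
  NatIso.ofComponents
    (fun X => ((Finsupp.domLCongr (surjTupleEquivSurjPairs i X.unop.carrier)).trans
      (sigmaFinsuppLequivDFinsupp k)).toModuleIso)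
    fun {X Y} g => by
      refine ModuleCat.hom_ext (Finsupp.lhom_ext fun t b => ?_)
      change sigmaFinsuppLequivDFinsupp k (Finsupp.domLCongr _
          (Finsupp.mapDomain _ (Finsupp.single t b))) =
        DFinsupp.mapRange.linearMap _
          (sigmaFinsuppLequivDFinsupp k (Finsupp.domLCongr _ (Finsupp.single t b)))
      rw [Finsupp.mapDomain_single, sigmaFinsuppLequivDFinsupp_domLCongr_single]
      erw [sigmaFinsuppLequivDFinsupp_domLCongr_single, DFinsupp.mapRange.linearMap_apply,
        DFinsupp.mapRange_single, Finsupp.lmapDomain_apply, Finsupp.mapDomain_single]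
      exact congrArg (fun p : SurjPairs i Y.unop.carrier =>
        DFinsupp.single (β := fun S : GoodSubsets i => SurjTo Y.unop S.1 →₀ k) p.1
          (Finsupp.single p.2 b)) (surjTupleEquivSurjPairs_comp g.unop.2 t)

theorem stmt_10_general (i : ℕ) (k : Type) [Field k] :
    (∀ (X : Type) [Finite X], Function.Bijective (tupleToPair i X)) ∧
    Nonempty (s2Pow k i ≅ sSum k i) :=
  ⟨fun X _ => tupleToPair_bijective i X, ⟨s2PowIsoSSum k i⟩⟩

/-- (a) For any finite set `X` and `i ≥ 1`, the map sending an `i`-tuple of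
surjections `X ↠ {0,1}` to the pair (image in `{0,1}^i`, corestriction) is a bijection onto
the pairs `(S, g)` of a subset `S ⊆ {0,1}^i` with surjective coordinate projections and a
surjection `g : X ↠ S`.  (b) Consequently, in `Fun(Γ₋ᵒᵖ, Vect_k)` the pointwise tensor
power `s₂^{⊗i}` decomposes as the direct sum `⊕_S s_{|S|}` over all such subsets `S`. -/
theorem stmt_10 (i : ℕ) (hi : 1 ≤ i) (k : Type) [Field k] :
    (∀ (X : Type) [Finite X], Function.Bijective (tupleToPair i X)) ∧
    Nonempty (s2Pow k i ≅ sSum k i) :=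
  stmt_10_general i k

end
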